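/- For unit vectors x, v, w in ℝ³ with x not parallel to v or w, cos(angle(v, w)) = sin θ · sin θ' · cos α + cos θ · cos θ', where θ = angle(x, v), θ' = angle(x, w), and α = angle(x × v, x × w). -/

import Mathlib

/-! By the Lagrange identity, `⟪x × v, x × w⟫ = ⟪v, w⟫ - cos θ cos θ'` for a unit vector `x`,
while `⟪x × v, x × w⟫ = ‖x × v‖ ‖x × w‖ cos α` with `‖x × v‖ = sin θ`, `‖x × w‖ = sin θ'`. -/

open InnerProductGeometry Real

noncomputable def cross3 (a b : EuclideanSpace ℝ (Fin 3)) : EuclideanSpace ℝ (Fin 3) :=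
  (WithLp.equiv 2 (Fin 3 → ℝ)).symm
    (crossProduct ((WithLp.equiv 2 (Fin 3 → ℝ)) a) ((WithLp.equiv 2 (Fin 3 → ℝ)) b))

open scoped RealInnerProductSpace

theorem inner_cross3_cross3 (a b c d : EuclideanSpace ℝ (Fin 3)) :
    ⟪cross3 a b, cross3 c d⟫ = ⟪a, c⟫ * ⟪b, d⟫ - ⟪a, d⟫ * ⟪b, c⟫ := by
  simp only [cross3, EuclideanSpace.inner_eq_star_dotProduct, star_trivial,
    WithLp.equiv_apply, WithLp.equiv_symm_apply]
  rw [cross_dot_cross]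
  ring

theorem norm_cross3 (a b : EuclideanSpace ℝ (Fin 3)) :
    ‖cross3 a b‖ = ‖a‖ * ‖b‖ * sin (angle a b) :=
  norm_ofLp_crossProduct a b

theorem stmt_2_general (x v w : EuclideanSpace ℝ (Fin 3))
    (hx : ‖x‖ = 1) (hv : ‖v‖ = 1) (hw : ‖w‖ = 1) :
    Real.cos (angle v w) =
      Real.sin (angle x v) * Real.sin (angle x w) *
          Real.cos (angle (cross3 x v) (cross3 x w)) +
        Real.cos (angle x v) * Real.cos (angle x w) := by
  have hxx : ⟪x, x⟫ = 1 := by rw [real_inner_self_eq_norm_sq, hx, one_pow]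
  calc Real.cos (angle v w)
      = ⟪cross3 x v, cross3 x w⟫ + ⟪x, v⟫ * ⟪x, w⟫ := by
        rw [← inner_eq_cos_angle_of_norm_eq_one hv hw, inner_cross3_cross3, hxx,
          real_inner_comm v x]
        ring
    _ = _ := by
        rw [← cos_angle_mul_norm_mul_norm, norm_cross3, norm_cross3,
          inner_eq_cos_angle_of_norm_eq_one hx hv, inner_eq_cos_angle_of_norm_eq_one hx hw,
          hx, hv, hw]
        ring

theorem stmt_2 (x v w : EuclideanSpace ℝ (Fin 3))
    (hx : ‖x‖ = 1) (hv : ‖v‖ = 1) (hw : ‖w‖ = 1)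
    (hxv : cross3 x v ≠ 0) (hxw : cross3 x w ≠ 0) :
    Real.cos (angle v w) =
      Real.sin (angle x v) * Real.sin (angle x w) *
          Real.cos (angle (cross3 x v) (cross3 x w)) +
        Real.cos (angle x v) * Real.cos (angle x w) :=
  stmt_2_general x v w hx hv hw
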